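/- (Hohenberg–Kohn/Mermin-type theorem for the canonical ensemble) Suppose v ↦ ρ_v := e^{-β(H₀+V(v))}/Z[v] is injective on traceless Hermitian potentials v. Then the map v ↦ γ[ρ_v] from traceless Hermitian potentials to 1RDMs is also injective: two distinct traceless potentials cannot yield the same equilibrium 1RDM. -/

import Mathlib

open Matrix BigOperators
open scoped ComplexOrder

/-- Von Neumann entropy `S(ρ) = -Tr(ρ log ρ)`, defined spectrally with `0 log 0 = 0`. -/
noncomputable def vnEntropy {n : Type*} [Fintype n] [DecidableEq n]
    (ρ : Matrix n n ℂ) : ℝ :=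
  if h : ρ.IsHermitian then -∑ i, h.eigenvalues i * Real.log (h.eigenvalues i) else 0

/-- A density matrix: Hermitian positive semidefinite with unit trace. -/
def IsDensityMatrix {n : Type*} [Fintype n] [DecidableEq n] (ρ : Matrix n n ℂ) : Prop :=
  ρ.PosSemidef ∧ ρ.trace = 1

/-- The Helmholtz functional `Ω(ρ) = Tr(ρH) + β⁻¹ Tr(ρ log ρ) = Tr(ρH) - β⁻¹ S(ρ)`. -/
noncomputable def helmholtz {n : Type*} [Fintype n] [DecidableEq n]
    (H : Matrix n n ℂ) (β : ℝ) (ρ : Matrix n n ℂ) : ℝ :=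
  ((ρ * H).trace).re - β⁻¹ * vnEntropy ρ

/-- The Gibbs state `e^{-βH} / Tr(e^{-βH})`. -/
noncomputable def gibbs {n : Type*} [Fintype n] [DecidableEq n]
    (β : ℝ) (H : Matrix n n ℂ) : Matrix n n ℂ :=
  ((NormedSpace.exp ((-β : ℂ) • H)).trace)⁻¹ • NormedSpace.exp ((-β : ℂ) • H)

/-!
Diagonalise `A = U diag(ε) U*` and a density matrix `ρ = W diag(p) W*`. With the doubly
stochastic matrix `Pᵢⱼ = |(W*U)ᵢⱼ|²` of squared eigenvector overlaps and the Gibbs weights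
`qⱼ = e^{-βεⱼ}/Z`, one finds `β Ω_A(ρ) + log Z = ∑ᵢⱼ Pᵢⱼ (pᵢ log pᵢ - pᵢ log qⱼ)`. By
`x log x - x log y ≥ x - y` this is `≥ ∑ᵢⱼ Pᵢⱼ (pᵢ - qⱼ) = 0`, with equality exactly when
`pᵢ = qⱼ` wherever `Pᵢⱼ ≠ 0`, i.e. when `ρ` is the Gibbs state. So the Gibbs state is the
strict minimiser of the Helmholtz functional.

If two potentials had distinct Gibbs states `ρ₁ ≠ ρ₂`, adding the two strict inequalities
`Ω₁(ρ₁) < Ω₁(ρ₂)` and `Ω₂(ρ₂) < Ω₂(ρ₁)` gives `Re Tr((ρ₁ - ρ₂) V(v₁ - v₂)) < 0`; by duality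
this is `Re Tr((γ[ρ₁] - γ[ρ₂]) (v₁ - v₂))`, which vanishes when the 1RDMs agree.
-/
open Finset Real

lemma Unitary.conj_eq_conj_iff {R : Type*} [Monoid R] [StarMul R] {w u : R}
    (hw : w ∈ unitary R) (hu : u ∈ unitary R) (x y : R) :
    w * x * star w = u * y * star u ↔ x * (star w * u) = star w * u * y := by
  have hw₁ (z : R) : star w * (w * z) = z := by
    rw [← mul_assoc, Unitary.star_mul_self_of_mem hw, one_mul]
  have hw₂ (z : R) : w * (star w * z) = z := by
    rw [← mul_assoc, Unitary.mul_star_self_of_mem hw, one_mul]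
  have hu₂ (z : R) : u * (star u * z) = z := by
    rw [← mul_assoc, Unitary.mul_star_self_of_mem hu, one_mul]
  constructor <;> intro h
  · simpa [mul_assoc, hw₁, Unitary.star_mul_self_of_mem hu] using
      congrArg (fun z => star w * z * u) h
  · simpa [mul_assoc, hw₂, hu₂, Unitary.mul_star_self_of_mem hu] using
      congrArg (fun z => w * z * star u) h

lemma InformationTheory.mul_klFun_div (x : ℝ) {y : ℝ} (hy : 0 < y) :
    y * klFun (x / y) = x * log x - x * log y - x + y := by
  rcases eq_or_ne x 0 with rfl | hx
  · simp [klFun_apply]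
  · rw [klFun_apply, log_div hx hy.ne']
    field_simp
    ring

section GibbsWeights

variable {n : Type*} [Fintype n]

noncomputable def partitionFunction (β : ℝ) (ε : n → ℝ) : ℝ := ∑ j, exp (-β * ε j)

noncomputable def gibbsWeights (β : ℝ) (ε : n → ℝ) (j : n) : ℝ :=
  exp (-β * ε j) / partitionFunction β ε

variable [Nonempty n] (β : ℝ) (ε : n → ℝ)

lemma partitionFunction_pos : 0 < partitionFunction β ε :=
  sum_pos (fun _ _ => exp_pos _) univ_nonempty

lemma gibbsWeights_pos (j : n) : 0 < gibbsWeights β ε j :=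
  div_pos (exp_pos _) (partitionFunction_pos β ε)

lemma sum_gibbsWeights : ∑ j, gibbsWeights β ε j = 1 := by
  simp only [gibbsWeights, ← sum_div]
  exact div_self (partitionFunction_pos β ε).ne'

lemma log_gibbsWeights (j : n) :
    log (gibbsWeights β ε j) = -β * ε j - log (partitionFunction β ε) := by
  rw [gibbsWeights, log_div (exp_ne_zero _) (partitionFunction_pos β ε).ne', log_exp]

end GibbsWeights

variable {n : Type*} [Fintype n] [DecidableEq n]

namespace Matrix

lemma diagonal_mul_eq_mul_diagonal_iff {R : Type*} [CommRing R] [NoZeroDivisors R]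
    {p q : n → R} {M : Matrix n n R} :
    diagonal p * M = M * diagonal q ↔ ∀ i j, M i j ≠ 0 → p i = q j := by
  simp only [← Matrix.ext_iff, diagonal_mul, mul_diagonal, mul_comm (M _ _)]
  refine forall₂_congr fun i j => ?_
  rw [mul_eq_mul_right_iff]
  tauto

lemma trace_unitary_conj {U : Matrix n n ℂ} (hU : U ∈ unitaryGroup n ℂ) (X : Matrix n n ℂ) :
    (U * X * star U).trace = X.trace := by
  rw [trace_mul_cycle, Unitary.star_mul_self_of_mem hU, one_mul]

/-- `|⟨wᵢ, uⱼ⟩|²` for the columns `wᵢ` of `W` and `uⱼ` of `U`. -/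
noncomputable def overlap (W U : Matrix n n ℂ) : Matrix n n ℝ :=
  of fun i j => Complex.normSq ((star W * U) i j)

lemma overlap_mem_doublyStochastic {W U : Matrix n n ℂ} (hW : W ∈ unitaryGroup n ℂ)
    (hU : U ∈ unitaryGroup n ℂ) : overlap W U ∈ doublyStochastic ℝ n := by
  obtain ⟨V, hV, hWU⟩ : ∃ V ∈ unitaryGroup n ℂ, star W * U = V :=
    ⟨_, mul_mem (Unitary.star_mem hW) hU, rfl⟩
  rw [mem_doublyStochastic_iff_sum]
  simp only [overlap, of_apply, hWU]
  refine ⟨fun i j => Complex.normSq_nonneg _, fun i => ?_, fun j => ?_⟩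
  · have := congrFun (congrFun (mem_unitaryGroup_iff.mp hV) i) i
    simp only [mul_apply, star_apply, one_apply_eq, Complex.star_def, Complex.mul_conj] at this
    exact_mod_cast this
  · have := congrFun (congrFun (mem_unitaryGroup_iff'.mp hV) j) j
    simp only [mul_apply, star_apply, one_apply_eq, Complex.star_def, mul_comm (starRingEnd ℂ _),
      Complex.mul_conj] at this
    exact_mod_cast this

lemma unitary_conj_diagonal_eq_iff {W U : Matrix n n ℂ} (hW : W ∈ unitaryGroup n ℂ)
    (hU : U ∈ unitaryGroup n ℂ) (p q : n → ℝ) :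
    W * diagonal (fun i => (p i : ℂ)) * star W = U * diagonal (fun j => (q j : ℂ)) * star U ↔
      ∀ i j, overlap W U i j ≠ 0 → p i = q j := by
  simp only [Unitary.conj_eq_conj_iff hW hU, diagonal_mul_eq_mul_diagonal_iff, overlap, of_apply,
    ne_eq, Complex.normSq_eq_zero, Complex.ofReal_inj]

lemma re_trace_diagonal_mul_diagonal_mul_star (V : Matrix n n ℂ) (a b : n → ℝ) :
    (diagonal (fun i => (a i : ℂ)) * V * diagonal (fun j => (b j : ℂ)) * star V).trace.re
      = ∑ i, ∑ j, Complex.normSq (V i j) * (a i * b j) := by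
  rw [trace, Complex.re_sum]
  refine sum_congr rfl fun i _ => ?_
  rw [diag_apply, mul_apply, Complex.re_sum]
  refine sum_congr rfl fun j _ => ?_
  rw [mul_diagonal, diagonal_mul, star_apply, Complex.star_def, Complex.normSq_apply]
  simp only [Complex.mul_re, Complex.mul_im, Complex.ofReal_re, Complex.ofReal_im,
    Complex.conj_re, Complex.conj_im]
  ring

lemma re_trace_unitary_conj_diagonal_mul {W U : Matrix n n ℂ} (hW : W ∈ unitaryGroup n ℂ)
    (a b : n → ℝ) :
    (W * diagonal (fun i => (a i : ℂ)) * star W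
        * (U * diagonal (fun j => (b j : ℂ)) * star U)).trace.re
      = ∑ i, ∑ j, overlap W U i j * (a i * b j) := by
  have hcycle : W * diagonal (fun i => (a i : ℂ)) * star W
        * (U * diagonal (fun j => (b j : ℂ)) * star U)
      = W * (diagonal (fun i => (a i : ℂ)) * (star W * U) * diagonal (fun j => (b j : ℂ))
        * star (star W * U)) * star W := by
    simp only [star_mul, star_star, mul_assoc, mem_unitaryGroup_iff.mp hW, mul_one]
  rw [hcycle, trace_unitary_conj hW, re_trace_diagonal_mul_diagonal_mul_star]
  rfl

end Matrix

open InformationTheory in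
/-- Klein's inequality `Tr ρ (log ρ - log σ) ≥ 0`, written in eigenbases of `ρ` and `σ`. -/
lemma sum_doublyStochastic_mul_log_pos {P : Matrix n n ℝ} (hP : P ∈ doublyStochastic ℝ n)
    {p q : n → ℝ} (hp : ∀ i, 0 ≤ p i) (hq : ∀ j, 0 < q j) (hpq : ∑ i, p i = ∑ j, q j)
    (hne : ∃ i j, P i j ≠ 0 ∧ p i ≠ q j) :
    0 < ∑ i, ∑ j, P i j * (p i * log (p i) - p i * log (q j)) := by
  have hmarg : ∑ i, ∑ j, P i j * (p i - q j) = 0 := by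
    have hrow : ∑ i, ∑ j, P i j * p i = ∑ i, p i := by
      simp only [← sum_mul, sum_row_of_mem_doublyStochastic hP, one_mul]
    have hcol : ∑ i, ∑ j, P i j * q j = ∑ j, q j := by
      rw [sum_comm]
      simp only [← sum_mul, sum_col_of_mem_doublyStochastic hP, one_mul]
    simp only [mul_sub, sum_sub_distrib, hrow, hcol, hpq, sub_self]
  have hkl : ∑ i, ∑ j, P i j * (p i * log (p i) - p i * log (q j))
      = ∑ i, ∑ j, P i j * (q j * klFun (p i / q j)) := by
    rw [← sub_zero (∑ i, ∑ j, _), ← hmarg, ← sum_sub_distrib]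
    refine sum_congr rfl fun i _ => ?_
    rw [← sum_sub_distrib]
    refine sum_congr rfl fun j _ => ?_
    rw [mul_klFun_div _ (hq j)]
    ring
  have hterm (i j : n) : 0 ≤ P i j * (q j * klFun (p i / q j)) :=
    mul_nonneg (nonneg_of_mem_doublyStochastic hP) <|
      mul_nonneg (hq j).le (klFun_nonneg (div_nonneg (hp i) (hq j).le))
  obtain ⟨i, j, hPij, hpqij⟩ := hne
  have hpos : 0 < P i j * (q j * klFun (p i / q j)) := by
    refine mul_pos ((nonneg_of_mem_doublyStochastic hP).lt_of_ne' hPij) (mul_pos (hq j) ?_)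
    refine (klFun_nonneg (div_nonneg (hp i) (hq j).le)).lt_of_ne' ?_
    rw [Ne, klFun_eq_zero_iff (div_nonneg (hp i) (hq j).le), div_eq_one_iff_eq (hq j).ne']
    exact hpqij
  rw [hkl]
  exact sum_pos' (fun i _ => sum_nonneg fun j _ => hterm i j)
    ⟨i, mem_univ _, sum_pos' (fun j _ => hterm i j) ⟨j, mem_univ _, hpos⟩⟩

lemma exp_smul_unitary_conj_diagonal (β : ℝ) {U : Matrix n n ℂ} (hU : U ∈ unitaryGroup n ℂ)
    (ε : n → ℝ) :
    NormedSpace.exp ((-β : ℂ) • (U * diagonal (fun j => (ε j : ℂ)) * star U))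
      = U * diagonal (fun j => (exp (-β * ε j) : ℂ)) * star U := by
  have hsmul : (-β : ℂ) • diagonal (fun j => (ε j : ℂ))
      = diagonal (fun j => ((-β * ε j : ℝ) : ℂ)) := by
    rw [← diagonal_smul]
    congr 1
    ext j
    simp
  rw [← Matrix.smul_mul, ← Matrix.mul_smul, hsmul]
  refine (Matrix.exp_units_conj (Unitary.toUnits ⟨U, hU⟩) _).trans ?_
  rw [exp_diagonal]
  change U * _ * star U = _
  congr 3
  rw [Pi.exp_def, ← Complex.exp_eq_exp_ℂ]
  simp only [Complex.ofReal_exp]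

lemma gibbs_unitary_conj_diagonal (β : ℝ) {U : Matrix n n ℂ} (hU : U ∈ unitaryGroup n ℂ)
    (ε : n → ℝ) :
    gibbs β (U * diagonal (fun j => (ε j : ℂ)) * star U)
      = U * diagonal (fun j => (gibbsWeights β ε j : ℂ)) * star U := by
  rw [gibbs, exp_smul_unitary_conj_diagonal β hU, Matrix.trace_unitary_conj hU, trace_diagonal,
    ← Matrix.smul_mul, ← Matrix.mul_smul, ← diagonal_smul]
  congr 3
  ext j
  simp [gibbsWeights, partitionFunction, div_eq_inv_mul]

lemma isDensityMatrix_gibbs_unitary_conj_diagonal [Nonempty n] (β : ℝ) {U : Matrix n n ℂ}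
    (hU : U ∈ unitaryGroup n ℂ) (ε : n → ℝ) :
    IsDensityMatrix (gibbs β (U * diagonal (fun j => (ε j : ℂ)) * star U)) := by
  rw [gibbs_unitary_conj_diagonal β hU]
  refine ⟨?_, ?_⟩
  · rw [(Unitary.isUnit_coe (U := ⟨U, hU⟩)).posSemidef_star_right_conjugate_iff,
      posSemidef_diagonal_iff]
    exact fun j => mod_cast (gibbsWeights_pos β ε j).le
  · rw [Matrix.trace_unitary_conj hU, trace_diagonal, ← Complex.ofReal_sum, sum_gibbsWeights,
      Complex.ofReal_one]

lemma Matrix.IsHermitian.isDensityMatrix_gibbs [Nonempty n] (β : ℝ) {A : Matrix n n ℂ}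
    (hA : A.IsHermitian) : IsDensityMatrix (gibbs β A) := by
  have hAU : A = hA.eigenvectorUnitary * diagonal (fun j => (hA.eigenvalues j : ℂ))
      * star (hA.eigenvectorUnitary : Matrix n n ℂ) := hA.spectral_theorem
  rw [hAU]
  exact isDensityMatrix_gibbs_unitary_conj_diagonal β hA.eigenvectorUnitary.2 _

lemma IsDensityMatrix.nonempty {ρ : Matrix n n ℂ} (hρ : IsDensityMatrix ρ) : Nonempty n := by
  by_contra h
  rw [not_nonempty_iff] at h
  simpa [trace] using hρ.2

lemma IsDensityMatrix.sum_eigenvalues {ρ : Matrix n n ℂ} (hρ : IsDensityMatrix ρ) :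
    ∑ i, hρ.1.isHermitian.eigenvalues i = 1 := by
  have h : ((∑ i, hρ.1.isHermitian.eigenvalues i : ℝ) : ℂ) = 1 := by
    rw [Complex.ofReal_sum]
    exact hρ.1.isHermitian.trace_eq_sum_eigenvalues.symm.trans hρ.2
  exact_mod_cast h

lemma mul_re_trace_sub_vnEntropy_add_log_partitionFunction {ρ : Matrix n n ℂ}
    (hρ : IsDensityMatrix ρ) (β : ℝ) {U : Matrix n n ℂ} (hU : U ∈ unitaryGroup n ℂ)
    (ε : n → ℝ) :
    β * (ρ * (U * diagonal (fun j => (ε j : ℂ)) * star U)).trace.re - vnEntropy ρ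
        + log (partitionFunction β ε)
      = ∑ i, ∑ j, overlap hρ.1.isHermitian.eigenvectorUnitary U i j *
          (hρ.1.isHermitian.eigenvalues i * log (hρ.1.isHermitian.eigenvalues i)
            - hρ.1.isHermitian.eigenvalues i * log (gibbsWeights β ε j)) := by
  have := hρ.nonempty
  set ρH := hρ.1.isHermitian
  set W := (ρH.eigenvectorUnitary : Matrix n n ℂ)
  set p := ρH.eigenvalues
  set P := overlap W U
  have hP := overlap_mem_doublyStochastic ρH.eigenvectorUnitary.2 hU
  have hρW : ρ = W * diagonal (fun i => (p i : ℂ)) * star W := ρH.spectral_theorem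
  have htr : (ρ * (U * diagonal (fun j => (ε j : ℂ)) * star U)).trace.re
      = ∑ i, ∑ j, P i j * (p i * ε j) := by
    rw [hρW, re_trace_unitary_conj_diagonal_mul ρH.eigenvectorUnitary.2]
  have hS : vnEntropy ρ = -∑ i, p i * log (p i) := by rw [vnEntropy, dif_pos ρH]
  have hrow (i : n) (c : ℝ) : ∑ j, P i j * c = c := by
    rw [← sum_mul, sum_row_of_mem_doublyStochastic hP, one_mul]
  have hterm (i j : n) : P i j * (p i * log (p i) - p i * log (gibbsWeights β ε j))
      = P i j * (p i * log (p i)) + β * (P i j * (p i * ε j))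
        + log (partitionFunction β ε) * (P i j * p i) := by
    rw [log_gibbsWeights]
    ring
  have hp : ∑ i, p i = 1 := hρ.sum_eigenvalues
  simp only [htr, hS, hterm, sum_add_distrib, ← mul_sum, hrow, hp]
  ring

section Variational

variable {β : ℝ} {U : Matrix n n ℂ} (ε : n → ℝ)

lemma helmholtz_eq_inv_mul_sum_overlap (hβ : β ≠ 0) (hU : U ∈ unitaryGroup n ℂ)
    {ρ : Matrix n n ℂ} (hρ : IsDensityMatrix ρ) :
    helmholtz (U * diagonal (fun j => (ε j : ℂ)) * star U) β ρ
      = β⁻¹ * ((∑ i, ∑ j, overlap hρ.1.isHermitian.eigenvectorUnitary U i j *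
          (hρ.1.isHermitian.eigenvalues i * log (hρ.1.isHermitian.eigenvalues i)
            - hρ.1.isHermitian.eigenvalues i * log (gibbsWeights β ε j)))
          - log (partitionFunction β ε)) := by
  rw [← mul_re_trace_sub_vnEntropy_add_log_partitionFunction hρ β hU, helmholtz]
  field_simp
  ring

theorem helmholtz_gibbs_unitary_conj_diagonal [Nonempty n] (hβ : β ≠ 0)
    (hU : U ∈ unitaryGroup n ℂ) :
    helmholtz (U * diagonal (fun j => (ε j : ℂ)) * star U) β
        (gibbs β (U * diagonal (fun j => (ε j : ℂ)) * star U))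
      = -β⁻¹ * log (partitionFunction β ε) := by
  have hσ := isDensityMatrix_gibbs_unitary_conj_diagonal β hU ε
  set σH := hσ.1.isHermitian
  have hσU : ∀ i j, overlap σH.eigenvectorUnitary U i j ≠ 0 →
      σH.eigenvalues i = gibbsWeights β ε j := by
    rw [← unitary_conj_diagonal_eq_iff σH.eigenvectorUnitary.2 hU,
      ← gibbs_unitary_conj_diagonal β hU]
    exact σH.spectral_theorem.symm
  have hsum : ∑ i, ∑ j, overlap σH.eigenvectorUnitary U i j *
      (σH.eigenvalues i * log (σH.eigenvalues i) - σH.eigenvalues i * log (gibbsWeights β ε j))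
      = 0 := by
    refine sum_eq_zero fun i _ => sum_eq_zero fun j _ => ?_
    by_cases h : overlap σH.eigenvectorUnitary U i j = 0
    · rw [h, zero_mul]
    · rw [hσU i j h, sub_self, mul_zero]
  rw [helmholtz_eq_inv_mul_sum_overlap ε hβ hU hσ, hsum]
  ring

theorem neg_inv_mul_log_partitionFunction_lt_helmholtz (hβ : 0 < β)
    (hU : U ∈ unitaryGroup n ℂ) {ρ : Matrix n n ℂ} (hρ : IsDensityMatrix ρ)
    (hne : ρ ≠ gibbs β (U * diagonal (fun j => (ε j : ℂ)) * star U)) :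
    -β⁻¹ * log (partitionFunction β ε)
      < helmholtz (U * diagonal (fun j => (ε j : ℂ)) * star U) β ρ := by
  have := hρ.nonempty
  set ρH := hρ.1.isHermitian
  have hmix : ∃ i j, overlap ρH.eigenvectorUnitary U i j ≠ 0 ∧
      ρH.eigenvalues i ≠ gibbsWeights β ε j := by
    by_contra! h
    refine hne (ρH.spectral_theorem.trans ?_)
    rw [gibbs_unitary_conj_diagonal β hU]
    exact (unitary_conj_diagonal_eq_iff ρH.eigenvectorUnitary.2 hU _ _).mpr h
  have hpos := sum_doublyStochastic_mul_log_pos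
    (overlap_mem_doublyStochastic ρH.eigenvectorUnitary.2 hU) hρ.1.eigenvalues_nonneg
    (gibbsWeights_pos β ε) (by rw [hρ.sum_eigenvalues, sum_gibbsWeights]) hmix
  rw [helmholtz_eq_inv_mul_sum_overlap ε hβ.ne' hU hρ]
  have := mul_pos (inv_pos.mpr hβ) hpos
  linarith

end Variational

theorem helmholtz_gibbs_lt {β : ℝ} (hβ : 0 < β) {A ρ : Matrix n n ℂ} (hA : A.IsHermitian)
    (hρ : IsDensityMatrix ρ) (hne : ρ ≠ gibbs β A) :
    helmholtz A β (gibbs β A) < helmholtz A β ρ := by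
  have := hρ.nonempty
  have hAU : A = hA.eigenvectorUnitary * diagonal (fun j => (hA.eigenvalues j : ℂ))
      * star (hA.eigenvectorUnitary : Matrix n n ℂ) := hA.spectral_theorem
  rw [hAU] at hne ⊢
  rw [helmholtz_gibbs_unitary_conj_diagonal _ hβ.ne' hA.eigenvectorUnitary.2]
  exact neg_inv_mul_log_partitionFunction_lt_helmholtz _ hβ hA.eigenvectorUnitary.2 hρ hne

lemma helmholtz_sub_helmholtz (A B : Matrix n n ℂ) (β : ℝ) (ρ : Matrix n n ℂ) :
    helmholtz A β ρ - helmholtz B β ρ = (ρ * (A - B)).trace.re := by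
  rw [helmholtz, helmholtz, mul_sub, trace_sub, Complex.sub_re]
  ring

theorem re_trace_gibbs_sub_mul_sub_neg {β : ℝ} (hβ : 0 < β) {A B : Matrix n n ℂ}
    (hA : A.IsHermitian) (hB : B.IsHermitian) (hne : gibbs β A ≠ gibbs β B) :
    ((gibbs β A - gibbs β B) * (A - B)).trace.re < 0 := by
  have : Nonempty n := by
    by_contra h
    rw [not_nonempty_iff] at h
    exact hne (Subsingleton.elim _ _)
  have hA_min := helmholtz_gibbs_lt hβ hA (hB.isDensityMatrix_gibbs β) hne.symm
  have hB_min := helmholtz_gibbs_lt hβ hB (hA.isDensityMatrix_gibbs β) hne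
  rw [sub_mul, trace_sub, Complex.sub_re, ← helmholtz_sub_helmholtz, ← helmholtz_sub_helmholtz]
  linarith

theorem mermin_canonical_general {d m : ℕ}
    (H₀ : Matrix (Fin d) (Fin d) ℂ) (hH₀ : H₀.IsHermitian) (β : ℝ) (hβ : 0 < β)
    (V : Matrix (Fin m) (Fin m) ℂ →ₗ[ℝ] Matrix (Fin d) (Fin d) ℂ)
    (Γ : Matrix (Fin d) (Fin d) ℂ →ₗ[ℝ] Matrix (Fin m) (Fin m) ℂ)
    (hVherm : ∀ v : Matrix (Fin m) (Fin m) ℂ, v.IsHermitian → (V v).IsHermitian)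
    (hdual : ∀ (ρ : Matrix (Fin d) (Fin d) ℂ) (v : Matrix (Fin m) (Fin m) ℂ),
      v.IsHermitian → (ρ * V v).trace = (Γ ρ * v).trace)
    (hinj : ∀ v₁ v₂ : Matrix (Fin m) (Fin m) ℂ, v₁.IsHermitian → v₂.IsHermitian →
      v₁.trace = 0 → v₂.trace = 0 →
      gibbs β (H₀ + V v₁) = gibbs β (H₀ + V v₂) → v₁ = v₂) :
    ∀ v₁ v₂ : Matrix (Fin m) (Fin m) ℂ, v₁.IsHermitian → v₂.IsHermitian →
      v₁.trace = 0 → v₂.trace = 0 →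
      Γ (gibbs β (H₀ + V v₁)) = Γ (gibbs β (H₀ + V v₂)) → v₁ = v₂ := by
  intro v₁ v₂ hv₁ hv₂ ht₁ ht₂ hΓ
  by_contra hne
  have hgibbs : gibbs β (H₀ + V v₁) ≠ gibbs β (H₀ + V v₂) :=
    fun h => hne (hinj v₁ v₂ hv₁ hv₂ ht₁ ht₂ h)
  have hlt := re_trace_gibbs_sub_mul_sub_neg hβ (hH₀.add (hVherm v₁ hv₁))
    (hH₀.add (hVherm v₂ hv₂)) hgibbs
  have hzero : ((gibbs β (H₀ + V v₁) - gibbs β (H₀ + V v₂))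
      * (H₀ + V v₁ - (H₀ + V v₂))).trace = 0 := by
    rw [add_sub_add_left_eq_sub, ← map_sub, hdual _ _ (hv₁.sub hv₂), map_sub, hΓ, sub_self,
      zero_mul, trace_zero]
  rw [hzero, Complex.zero_re] at hlt
  exact lt_irrefl 0 hlt

/-- (Hohenberg–Kohn/Mermin-type theorem for the canonical ensemble.) If the map from traceless
Hermitian potentials `v` to Gibbs states `ρ_v = e^{-β(H₀+V(v))}/Z[v]` is injective, then the map
`v ↦ γ[ρ_v]` to equilibrium 1RDMs is also injective. Here `V` embeds one-body potentials into
`N`-particle Hamiltonians and `Γ` is the 1RDM map, dual to each other: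
`Tr(ρ V(v)) = Tr(γ[ρ] v)`. -/
theorem mermin_canonical {d m : ℕ} (hd : 0 < d)
    (H₀ : Matrix (Fin d) (Fin d) ℂ) (hH₀ : H₀.IsHermitian) (β : ℝ) (hβ : 0 < β)
    (V : Matrix (Fin m) (Fin m) ℂ →ₗ[ℝ] Matrix (Fin d) (Fin d) ℂ)
    (Γ : Matrix (Fin d) (Fin d) ℂ →ₗ[ℝ] Matrix (Fin m) (Fin m) ℂ)
    (hVherm : ∀ v : Matrix (Fin m) (Fin m) ℂ, v.IsHermitian → (V v).IsHermitian)
    (hdual : ∀ (ρ : Matrix (Fin d) (Fin d) ℂ) (v : Matrix (Fin m) (Fin m) ℂ),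
      v.IsHermitian → (ρ * V v).trace = (Γ ρ * v).trace)
    (hinj : ∀ v₁ v₂ : Matrix (Fin m) (Fin m) ℂ, v₁.IsHermitian → v₂.IsHermitian →
      v₁.trace = 0 → v₂.trace = 0 →
      gibbs β (H₀ + V v₁) = gibbs β (H₀ + V v₂) → v₁ = v₂) :
    ∀ v₁ v₂ : Matrix (Fin m) (Fin m) ℂ, v₁.IsHermitian → v₂.IsHermitian →
      v₁.trace = 0 → v₂.trace = 0 →
      Γ (gibbs β (H₀ + V v₁)) = Γ (gibbs β (H₀ + V v₂)) → v₁ = v₂ :=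
  mermin_canonical_general H₀ hH₀ β hβ V Γ hVherm hdual hinj
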